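/- arXiv:1201.5725 — 4 statements merged into one kernel-verified Lean document; each statement's English description precedes it below -/
import Mathlib

section
/- Let Λ ≥ 0 and R > 0. Suppose a, b : (0,R] → ℝ are C², p is C¹, ρ and p⊥ are continuous, q is C¹ on (0,R], and the static spherically symmetric Einstein–Maxwell equations (ee1)–(ee3) hold on (0,R], with ρ ≥ 0, p ≥ 0 and p + 2p⊥ ≤ ρ on (0,R]. Assume the regular-centre conditions: e^{-b(r)} = 1 - 2m(r)/r - f(r)/r - Λr²/3 for all r ∈ (0,R], lim_{r→0⁺} q(r)²/r² = 0, lim_{r→0⁺} r²p(r) = 0, and lim_{r→0⁺} m(r)/r = 0. If in addition q(r)²/r² + Λr² ≤ 1 for all r ∈ (0,R], then for all r ∈ (0,R]: m_g(r)/r ≤ 2/9 + q(r)²/(3r²) - Λr²/3 + (2/9)·√(1 + 3q(r)²/r² + 3Λr²). -/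
open Real Set MeasureTheory

noncomputable section

/-- The mass within area radius `r`: `m(r) = ∫₀ʳ 4πρ(η)η² dη`. -/
def mFun (ρ : ℝ → ℝ) (r : ℝ) : ℝ := ∫ η in Ioc (0 : ℝ) r, 4 * π * ρ η * η ^ 2

/-- The function `f(r) = ∫₀ʳ q(η)²/η² dη`. -/
def fFun (q : ℝ → ℝ) (r : ℝ) : ℝ := ∫ η in Ioc (0 : ℝ) r, q η ^ 2 / η ^ 2

/-- The gravitational mass `m_g(r) = m(r) + q(r)²/(2r) + f(r)/2`. -/
def mg (ρ q : ℝ → ℝ) (r : ℝ) : ℝ := mFun ρ r + q r ^ 2 / (2 * r) + fFun q r / 2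

/-!
Write `c = e^{-b/2}`. The function `g(r) = r e^{a/2} (c (r a'/2 + 2) - 2)` is nonincreasing on
`(0, R]`: its derivative is `e^{a/2}` times a quantity which, once `b'` and `a''` are eliminated
with (ee1) and (ee3), is a sum of terms made nonpositive by `p ≥ 0`, `p + 2p⊥ ≤ ρ`,
`q²/r² + Λr² ≤ 1` and `c ≤ 1` (the latter because `m, f ≥ 0`). At the centre `g → 0`: (ee2) and
`q²/r² + Λr² ≤ 1` make `a + log r` nondecreasing, so `r e^{a/2} = O(√r)`, while the bracket tends
to `0` because `c → 1`. Hence `g ≤ 0`, which together with (ee2) and `p ≥ 0` gives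
`3c² - 4c + 1 ≤ q²/r² + Λr²`. Solving this for `c² = e^{-b}` and inserting
`e^{-b} = 1 - 2m_g/r + q²/r² - Λr²/3` gives the bound.
-/

open Filter Topology

theorem antitoneOn_of_hasDerivAt_nonpos {D : Set ℝ} (hD : Convex ℝ D) {f f' : ℝ → ℝ}
    (hf : ∀ x ∈ D, HasDerivAt f (f' x) x) (hf' : ∀ x ∈ D, f' x ≤ 0) : AntitoneOn f D :=
  antitoneOn_of_hasDerivWithinAt_nonpos hD
    (fun x hx => (hf x hx).continuousAt.continuousWithinAt)
    (fun x hx => (hf x (interior_subset hx)).hasDerivWithinAt)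
    fun x hx => hf' x (interior_subset hx)

theorem monotoneOn_of_hasDerivAt_nonneg {D : Set ℝ} (hD : Convex ℝ D) {f f' : ℝ → ℝ}
    (hf : ∀ x ∈ D, HasDerivAt f (f' x) x) (hf' : ∀ x ∈ D, 0 ≤ f' x) : MonotoneOn f D :=
  monotoneOn_of_hasDerivWithinAt_nonneg hD
    (fun x hx => (hf x hx).continuousAt.continuousWithinAt)
    (fun x hx => (hf x (interior_subset hx)).hasDerivWithinAt)
    fun x hx => hf' x (interior_subset hx)

theorem AntitoneOn.le_of_tendsto_nhdsGT_zero {g : ℝ → ℝ} {R L r : ℝ} (hg : AntitoneOn g (Ioc 0 R))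
    (hlim : Tendsto g (𝓝[>] 0) (𝓝 L)) (hr : r ∈ Ioc 0 R) : g r ≤ L :=
  ge_of_tendsto hlim <| mem_of_superset (Ioc_mem_nhdsGT hr.1) fun _ hs =>
    hg ⟨hs.1, hs.2.trans hr.2⟩ hr hs.2

theorem tendsto_setIntegral_Ioc_zero_div_self {h : ℝ → ℝ} (hh : Tendsto h (𝓝[>] 0) (𝓝 0)) :
    Tendsto (fun s => (∫ η in Ioc 0 s, h η) / s) (𝓝[>] 0) (𝓝 0) := by
  rw [Metric.tendsto_nhdsWithin_nhds] at hh ⊢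
  intro ε hε
  obtain ⟨δ, hδ, hδh⟩ := hh (ε / 2) (half_pos hε)
  refine ⟨δ, hδ, fun s (hs : 0 < s) hsδ => ?_⟩
  rw [Real.dist_eq, sub_zero, abs_of_pos hs] at hsδ
  have hbound : ‖∫ η in Ioc 0 s, h η‖ ≤ ε / 2 * s := by
    have hle : ∀ η ∈ Ioc 0 s, ‖h η‖ ≤ ε / 2 := fun η hη => by
      have := hδh hη.1 (by rw [Real.dist_eq, sub_zero, abs_of_pos hη.1]; exact hη.2.trans_lt hsδ)
      exact (dist_zero_right (h η) ▸ this).le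
    simpa [Real.volume_real_Ioc_of_le hs.le] using
      norm_setIntegral_le_of_norm_le_const (μ := volume) measure_Ioc_lt_top hle
  rw [dist_zero_right, norm_div, Real.norm_of_nonneg hs.le, div_lt_iff₀ hs]
  nlinarith

theorem tendsto_mul_exp_half_nhdsGT_zero {a : ℝ → ℝ} {R : ℝ} (hR : 0 < R)
    (ha : MonotoneOn (fun t => a t + log t) (Ioc 0 R)) :
    Tendsto (fun s => s * exp (a s / 2)) (𝓝[>] 0) (𝓝 0) := by
  have hbound : ∀ s ∈ Ioc 0 R, s * exp (a s / 2) ≤ √s * exp ((a R + log R) / 2) := fun s hs => by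
    have hsqrt : s * exp (a s / 2) = √s * exp ((a s + log s) / 2) := by
      rw [add_div, exp_add, exp_half (log s), exp_log hs.1]
      linear_combination -exp (a s / 2) * mul_self_sqrt hs.1.le
    have hmono : a s + log s ≤ a R + log R := ha hs (right_mem_Ioc.2 hR) hs.2
    rw [hsqrt]
    gcongr
  have hsqrt : Tendsto (fun s : ℝ => √s) (𝓝[>] 0) (𝓝 0) := by
    simpa using (continuous_sqrt.tendsto 0).mono_left nhdsWithin_le_nhds
  have hlim := hsqrt.mul_const (exp ((a R + log R) / 2))
  rw [zero_mul] at hlim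
  refine squeeze_zero' ?_ (mem_of_superset (Ioc_mem_nhdsGT hR) hbound) hlim
  filter_upwards [self_mem_nhdsWithin] with s (hs : 0 < s)
  positivity

theorem tendsto_mul_sq_nhdsGT_zero (Λ : ℝ) : Tendsto (fun s : ℝ => Λ * s ^ 2) (𝓝[>] 0) (𝓝 0) :=
  ((by fun_prop : Continuous fun s : ℝ => Λ * s ^ 2).tendsto' 0 0 (by simp)).mono_left
    nhdsWithin_le_nhds

theorem exp_neg_eq_exp_neg_half_sq (B : ℝ) : exp (-B) = exp (-B / 2) ^ 2 := by
  rw [← exp_nat_mul]; ring_nf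

theorem ee1_scaled {Λ r ρ q e b₁ : ℝ} (hr : r ≠ 0)
    (h : 8 * π * ρ + q ^ 2 / r ^ 4 = (1 / r ^ 2) * (1 - e + r * b₁ * e) - Λ) :
    r * b₁ * e = 8 * π * ρ * r ^ 2 + (q ^ 2 / r ^ 2 + Λ * r ^ 2) - 1 + e := by
  linear_combination (norm := (field_simp; ring)) -r ^ 2 * h

theorem ee2_scaled {Λ r p q e a₁ : ℝ} (hr : r ≠ 0)
    (h : 8 * π * p - q ^ 2 / r ^ 4 = e / r ^ 2 + a₁ * e / r - 1 / r ^ 2 + Λ) :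
    r * a₁ * e = 8 * π * p * r ^ 2 - (q ^ 2 / r ^ 2 + Λ * r ^ 2) + 1 - e := by
  linear_combination (norm := (field_simp; ring)) -r ^ 2 * h

theorem ee3_scaled {Λ r pT q e a₁ a₂ b₁ : ℝ} (hr : r ≠ 0)
    (h : 8 * π * pT - q ^ 2 / r ^ 4 = (e / 2) * (a₂ + (a₁ / 2 + 1 / r) * (a₁ - b₁)) + Λ) :
    e * (r ^ 2 * a₂ + (r * a₁ / 2 + 1) * (r * a₁ - r * b₁)) =
      2 * (8 * π * pT * r ^ 2) - 2 * (q ^ 2 / r ^ 2 + Λ * r ^ 2) := by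
  linear_combination (norm := (field_simp; ring)) -2 * r ^ 2 * h

/-- In the variables `c = e^{-b/2}`, `x = r a'`, `y = r b'`, `A = r² a''`, `u = 8πp r²`,
`v = 8πρ r²`, `T = 8πp⊥ r²` and `X = q²/r² + Λr²`, the hypotheses `e1`–`e3` are the scaled field
equations and the conclusion is the sign of the derivative of `buchdahlFunction` below. -/
theorem buchdahl_deriv_factor_nonpos {c u v T X x y A : ℝ} (hc0 : 0 < c) (hc1 : c ≤ 1)
    (hu : 0 ≤ u) (hX0 : 0 ≤ X) (hX1 : X ≤ 1) (hdom : u + 2 * T ≤ v)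
    (e1 : y * c ^ 2 = v + X - 1 + c ^ 2) (e2 : x * c ^ 2 = u - X + 1 - c ^ 2)
    (e3 : c ^ 2 * (A + (x / 2 + 1) * (x - y)) = 2 * T - 2 * X) :
    c * (x + 2 + (x - y) * (x / 2 + 2) / 2 + A / 2) - (2 + x) ≤ 0 := by
  have key : 2 * c ^ 2 * ((2 + x) - c * (x + 2 + (x - y) * (x / 2 + 2) / 2 + A / 2)) =
      2 * (1 - X) * (1 - c) ^ 2 + 2 * X * c * (c + 1) + 2 * u * (1 - c) + c * (v - 2 * T - u) := by
    linear_combination (2 - 3 * c) * e2 + c * e1 - c * e3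
  have hsum : 0 ≤ 2 * (1 - X) * (1 - c) ^ 2 + 2 * X * c * (c + 1) + 2 * u * (1 - c)
      + c * (v - 2 * T - u) := by
    have h1 : 0 ≤ 1 - X := by linarith
    have h2 : 0 ≤ 1 - c := by linarith
    have h3 : 0 ≤ v - 2 * T - u := by linarith
    have := hc0.le
    positivity
  linarith [nonneg_of_mul_nonneg_right (key ▸ hsum) (by positivity)]

theorem three_mul_sq_sub_four_mul_add_one_le {c u x X : ℝ} (hc : 0 ≤ c) (hu : 0 ≤ u)
    (e2 : x * c ^ 2 = u - X + 1 - c ^ 2) (h : c * (x / 2 + 2) ≤ 2) :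
    3 * c ^ 2 - 4 * c + 1 ≤ X := by
  linarith [mul_le_mul_of_nonneg_left h hc]

theorem one_sub_sq_div_two_le {c X : ℝ} (h : 3 * c ^ 2 - 4 * c + 1 ≤ X) (hX : X ≤ 1) :
    (1 - c ^ 2) / 2 ≤ 2 / 9 - X / 6 + 2 / 9 * √(1 + 3 * X) := by
  have hsq : (3 * c - 2) ^ 2 ≤ 1 + 3 * X := by linarith
  have hS : √(1 + 3 * X) ^ 2 = 1 + 3 * X := sq_sqrt ((sq_nonneg _).trans hsq)
  have hS2 : √(1 + 3 * X) ≤ 2 := (sqrt_le_left zero_le_two).2 (by linarith)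
  have hc : 2 - √(1 + 3 * X) ≤ 3 * c := by linarith [(abs_le.1 (abs_le_sqrt hsq)).1]
  linarith [pow_le_pow_left₀ (by linarith) hc 2]

theorem mFun_nonneg {ρ : ℝ → ℝ} {r : ℝ} (hρ : ∀ s ∈ Ioc 0 r, 0 ≤ ρ s) : 0 ≤ mFun ρ r :=
  setIntegral_nonneg measurableSet_Ioc fun η hη => by have := hρ η hη; positivity

theorem fFun_nonneg (q : ℝ → ℝ) (r : ℝ) : 0 ≤ fFun q r :=
  setIntegral_nonneg measurableSet_Ioc fun η _ => by positivity

theorem mg_div_self_eq {ρ q : ℝ → ℝ} {Λ r e : ℝ} (hr : r ≠ 0)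
    (h : e = 1 - 2 * mFun ρ r / r - fFun q r / r - Λ * r ^ 2 / 3) :
    mg ρ q r / r = (1 - e) / 2 - Λ * r ^ 2 / 6 + q r ^ 2 / r ^ 2 / 2 := by
  rw [h, mg]
  field_simp
  ring

def buchdahlFunction (a a' b : ℝ → ℝ) (r : ℝ) : ℝ :=
  r * exp (a r / 2) * (exp (-b r / 2) * (r * a' r / 2 + 2) - 2)

theorem hasDerivAt_buchdahlFunction {a a' a'' b b' : ℝ → ℝ} {r : ℝ}
    (ha : HasDerivAt a (a' r) r) (ha' : HasDerivAt a' (a'' r) r) (hb : HasDerivAt b (b' r) r) :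
    HasDerivAt (buchdahlFunction a a' b) (exp (a r / 2) * (exp (-b r / 2) *
      (r * a' r + 2 + (r * a' r - r * b' r) * (r * a' r / 2 + 2) / 2 + r ^ 2 * a'' r / 2)
        - (2 + r * a' r))) r := by
  have := ((hasDerivAt_id r).mul (ha.div_const 2).exp).mul
    (((hb.neg.div_const 2).exp.mul
      ((((hasDerivAt_id r).mul ha').div_const 2).add_const 2)).sub_const 2)
  refine this.congr_deriv ?_
  simp only [Pi.mul_apply, Pi.neg_apply, id]
  ring

section FieldEquations

variable {Λ R : ℝ} {a a' a'' b b' p ρ pT q : ℝ → ℝ}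

theorem nonneg_of_exp_neg_eq {B r : ℝ} (hΛ : 0 ≤ Λ) (hr : 0 < r) (hρ : ∀ s ∈ Ioc 0 r, 0 ≤ ρ s)
    (h : exp (-B) = 1 - 2 * mFun ρ r / r - fFun q r / r - Λ * r ^ 2 / 3) : 0 ≤ B := by
  have hm := mFun_nonneg hρ
  have hf := fFun_nonneg q r
  have : exp (-B) ≤ 1 := by
    rw [h]
    have : 0 ≤ 2 * mFun ρ r / r + fFun q r / r + Λ * r ^ 2 / 3 := by positivity
    linarith
  linarith [exp_le_one_iff.1 this]

theorem antitoneOn_buchdahlFunction (hΛ : 0 ≤ Λ)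
    (ha : ∀ r ∈ Ioc 0 R, HasDerivAt a (a' r) r)
    (ha' : ∀ r ∈ Ioc 0 R, HasDerivAt a' (a'' r) r)
    (hb : ∀ r ∈ Ioc 0 R, HasDerivAt b (b' r) r)
    (ee1 : ∀ r ∈ Ioc 0 R, 8 * π * ρ r + q r ^ 2 / r ^ 4 =
      (1 / r ^ 2) * (1 - Real.exp (-(b r)) + r * b' r * Real.exp (-(b r))) - Λ)
    (ee2 : ∀ r ∈ Ioc 0 R, 8 * π * p r - q r ^ 2 / r ^ 4 =
      Real.exp (-(b r)) / r ^ 2 + a' r * Real.exp (-(b r)) / r - 1 / r ^ 2 + Λ)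
    (ee3 : ∀ r ∈ Ioc 0 R, 8 * π * pT r - q r ^ 2 / r ^ 4 =
      (Real.exp (-(b r)) / 2) * (a'' r + (a' r / 2 + 1 / r) * (a' r - b' r)) + Λ)
    (hp : ∀ r ∈ Ioc 0 R, 0 ≤ p r) (hdom : ∀ r ∈ Ioc 0 R, p r + 2 * pT r ≤ ρ r)
    (hcond : ∀ r ∈ Ioc 0 R, q r ^ 2 / r ^ 2 + Λ * r ^ 2 ≤ 1)
    (hb0 : ∀ r ∈ Ioc 0 R, 0 ≤ b r) :
    AntitoneOn (buchdahlFunction a a' b) (Ioc 0 R) := by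
  refine antitoneOn_of_hasDerivAt_nonpos (convex_Ioc 0 R)
    (fun s hs => hasDerivAt_buchdahlFunction (ha s hs) (ha' s hs) (hb s hs)) fun s hs => ?_
  have e1 := ee1_scaled hs.1.ne' (ee1 s hs)
  have e2 := ee2_scaled hs.1.ne' (ee2 s hs)
  have e3 := ee3_scaled hs.1.ne' (ee3 s hs)
  rw [exp_neg_eq_exp_neg_half_sq] at e1 e2 e3
  have hp8 : 0 ≤ 8 * π * p s * s ^ 2 := by have := hp s hs; positivity
  have hdom8 : 8 * π * p s * s ^ 2 + 2 * (8 * π * pT s * s ^ 2) ≤ 8 * π * ρ s * s ^ 2 := by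
    linarith [mul_le_mul_of_nonneg_left (hdom s hs) (by positivity : 0 ≤ 8 * π * s ^ 2)]
  refine mul_nonpos_of_nonneg_of_nonpos (exp_pos _).le
    (buchdahl_deriv_factor_nonpos (exp_pos _) (exp_le_one_iff.2 (by linarith [hb0 s hs])) hp8
      (by positivity) (hcond s hs) hdom8 e1 e2 e3)

theorem monotoneOn_add_log
    (ha : ∀ r ∈ Ioc 0 R, HasDerivAt a (a' r) r)
    (ee2 : ∀ r ∈ Ioc 0 R, 8 * π * p r - q r ^ 2 / r ^ 4 =
      Real.exp (-(b r)) / r ^ 2 + a' r * Real.exp (-(b r)) / r - 1 / r ^ 2 + Λ)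
    (hp : ∀ r ∈ Ioc 0 R, 0 ≤ p r) (hcond : ∀ r ∈ Ioc 0 R, q r ^ 2 / r ^ 2 + Λ * r ^ 2 ≤ 1) :
    MonotoneOn (fun t => a t + log t) (Ioc 0 R) := by
  refine monotoneOn_of_hasDerivAt_nonneg (convex_Ioc 0 R)
    (fun s hs => (ha s hs).add (hasDerivAt_log hs.1.ne')) fun s hs => ?_
  have e2 := ee2_scaled hs.1.ne' (ee2 s hs)
  have hp8 : 0 ≤ 8 * π * p s * s ^ 2 := by have := hp s hs; positivity
  have hx : 0 ≤ s * a' s + 1 := by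
    refine nonneg_of_mul_nonneg_right (?_ : 0 ≤ exp (-b s) * (s * a' s + 1)) (exp_pos _)
    linarith [hcond s hs]
  rw [show a' s + s⁻¹ = (s * a' s + 1) / s by
    rw [add_div, mul_div_cancel_left₀ _ hs.1.ne', one_div]]
  exact div_nonneg hx hs.1.le

theorem tendsto_exp_neg_half_nhdsGT_zero (hR : 0 < R)
    (hmatch : ∀ r ∈ Ioc 0 R,
      Real.exp (-(b r)) = 1 - 2 * mFun ρ r / r - fFun q r / r - Λ * r ^ 2 / 3)
    (hq0 : Tendsto (fun r => q r ^ 2 / r ^ 2) (𝓝[>] 0) (𝓝 0))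
    (hm0 : Tendsto (fun r => mFun ρ r / r) (𝓝[>] 0) (𝓝 0)) :
    Tendsto (fun s => exp (-b s / 2)) (𝓝[>] 0) (𝓝 1) := by
  have hf0 : Tendsto (fun r => fFun q r / r) (𝓝[>] 0) (𝓝 0) :=
    tendsto_setIntegral_Ioc_zero_div_self hq0
  have hlim := (((hm0.const_mul 2).const_sub 1).sub hf0).sub
    ((tendsto_mul_sq_nhdsGT_zero Λ).div_const 3)
  have hexp : Tendsto (fun s => exp (-b s)) (𝓝[>] 0) (𝓝 1) := by
    refine (hlim.congr' ?_).trans (by norm_num)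
    filter_upwards [Ioc_mem_nhdsGT hR] with s hs
    rw [hmatch s hs]
    ring
  simpa [exp_half] using hexp.sqrt

theorem tendsto_buchdahlFunction_nhdsGT_zero (hR : 0 < R)
    (ha : ∀ r ∈ Ioc 0 R, HasDerivAt a (a' r) r)
    (ee2 : ∀ r ∈ Ioc 0 R, 8 * π * p r - q r ^ 2 / r ^ 4 =
      Real.exp (-(b r)) / r ^ 2 + a' r * Real.exp (-(b r)) / r - 1 / r ^ 2 + Λ)
    (hp : ∀ r ∈ Ioc 0 R, 0 ≤ p r) (hcond : ∀ r ∈ Ioc 0 R, q r ^ 2 / r ^ 2 + Λ * r ^ 2 ≤ 1)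
    (hp0 : Tendsto (fun r => r ^ 2 * p r) (𝓝[>] 0) (𝓝 0))
    (hq0 : Tendsto (fun r => q r ^ 2 / r ^ 2) (𝓝[>] 0) (𝓝 0))
    (hc : Tendsto (fun s => exp (-b s / 2)) (𝓝[>] 0) (𝓝 1)) :
    Tendsto (buchdahlFunction a a' b) (𝓝[>] 0) (𝓝 0) := by
  have hfactor := tendsto_mul_exp_half_nhdsGT_zero hR (monotoneOn_add_log ha ee2 hp hcond)
  -- by (ee2) the bracket equals `(u - X + 1 + 3c² - 4c) / (2c)`, in the notation of
  -- `buchdahl_deriv_factor_nonpos`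
  have hbracket : Tendsto (fun s => exp (-b s / 2) * (s * a' s / 2 + 2) - 2) (𝓝[>] 0) (𝓝 0) := by
    have hX := hq0.add (tendsto_mul_sq_nhdsGT_zero Λ)
    have hnum := ((((hp0.const_mul (8 * π)).sub hX).add_const 1).add
      ((hc.pow 2).const_mul 3)).sub (hc.const_mul 4)
    refine ((hnum.div (hc.const_mul 2) (by norm_num)).congr' ?_).trans (by norm_num)
    filter_upwards [Ioc_mem_nhdsGT hR] with s hs
    have e2 := ee2_scaled hs.1.ne' (ee2 s hs)
    rw [exp_neg_eq_exp_neg_half_sq] at e2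
    rw [Pi.div_apply, div_eq_iff (by positivity)]
    linear_combination -e2
  have hlim := hfactor.mul hbracket
  rw [zero_mul] at hlim
  exact hlim

end FieldEquations

theorem compactness_bound_charged_cosmological_general
    (Λ R : ℝ) (hΛ : 0 ≤ Λ) (hR : 0 < R)
    (a a' a'' b b' p ρ pT q : ℝ → ℝ)
    -- a and b are C² on (0, R]
    (ha : ∀ r ∈ Ioc 0 R, HasDerivAt a (a' r) r)
    (ha' : ∀ r ∈ Ioc 0 R, HasDerivAt a' (a'' r) r)
    (hb : ∀ r ∈ Ioc 0 R, HasDerivAt b (b' r) r)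
    -- the Einstein–Maxwell equations (ee1)–(ee3) on (0, R]
    (ee1 : ∀ r ∈ Ioc 0 R, 8 * π * ρ r + q r ^ 2 / r ^ 4 =
      (1 / r ^ 2) * (1 - Real.exp (-(b r)) + r * b' r * Real.exp (-(b r))) - Λ)
    (ee2 : ∀ r ∈ Ioc 0 R, 8 * π * p r - q r ^ 2 / r ^ 4 =
      Real.exp (-(b r)) / r ^ 2 + a' r * Real.exp (-(b r)) / r - 1 / r ^ 2 + Λ)
    (ee3 : ∀ r ∈ Ioc 0 R, 8 * π * pT r - q r ^ 2 / r ^ 4 =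
      (Real.exp (-(b r)) / 2) *
        (a'' r + (a' r / 2 + 1 / r) * (a' r - b' r)) + Λ)
    -- sign and energy conditions
    (hρ : ∀ r ∈ Ioc 0 R, 0 ≤ ρ r)
    (hppos : ∀ r ∈ Ioc 0 R, 0 ≤ p r)
    (hdom : ∀ r ∈ Ioc 0 R, p r + 2 * pT r ≤ ρ r)
    -- regular-centre conditions
    (hmatch : ∀ r ∈ Ioc 0 R,
      Real.exp (-(b r)) = 1 - 2 * mFun ρ r / r - fFun q r / r - Λ * r ^ 2 / 3)
    (hq0 : Filter.Tendsto (fun r => q r ^ 2 / r ^ 2)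
      (nhdsWithin 0 (Ioi 0)) (nhds 0))
    (hp0 : Filter.Tendsto (fun r => r ^ 2 * p r)
      (nhdsWithin 0 (Ioi 0)) (nhds 0))
    (hm0 : Filter.Tendsto (fun r => mFun ρ r / r)
      (nhdsWithin 0 (Ioi 0)) (nhds 0))
    -- main condition
    (hcond : ∀ r ∈ Ioc 0 R, q r ^ 2 / r ^ 2 + Λ * r ^ 2 ≤ 1) :
    ∀ r ∈ Ioc 0 R,
      mg ρ q r / r ≤ 2 / 9 + q r ^ 2 / (3 * r ^ 2) - Λ * r ^ 2 / 3
        + (2 / 9) * Real.sqrt (1 + 3 * q r ^ 2 / r ^ 2 + 3 * Λ * r ^ 2) := by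
  intro r hr
  have hb0 : ∀ s ∈ Ioc 0 R, 0 ≤ b s := fun s hs =>
    nonneg_of_exp_neg_eq hΛ hs.1 (fun t ht => hρ t ⟨ht.1, ht.2.trans hs.2⟩) (hmatch s hs)
  have hg : buchdahlFunction a a' b r ≤ 0 :=
    (antitoneOn_buchdahlFunction hΛ ha ha' hb ee1 ee2 ee3 hppos hdom hcond hb0
      ).le_of_tendsto_nhdsGT_zero (tendsto_buchdahlFunction_nhdsGT_zero hR ha ee2 hppos hcond hp0
        hq0 (tendsto_exp_neg_half_nhdsGT_zero hR hmatch hq0 hm0)) hr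
  have hbracket : exp (-b r / 2) * (r * a' r / 2 + 2) ≤ 2 :=
    sub_nonpos.1 (nonpos_of_mul_nonpos_right hg (by have := hr.1; positivity))
  have e2 := ee2_scaled hr.1.ne' (ee2 r hr)
  have hp8 : 0 ≤ 8 * π * p r * r ^ 2 := by have := hppos r hr; positivity
  rw [exp_neg_eq_exp_neg_half_sq] at e2
  have hquad := three_mul_sq_sub_four_mul_add_one_le (exp_pos _).le hp8 e2 hbracket
  rw [mg_div_self_eq hr.1.ne' (hmatch r hr), exp_neg_eq_exp_neg_half_sq,
    show q r ^ 2 / (3 * r ^ 2) = q r ^ 2 / r ^ 2 / 3 by ring,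
    show 1 + 3 * q r ^ 2 / r ^ 2 + 3 * Λ * r ^ 2 = 1 + 3 * (q r ^ 2 / r ^ 2 + Λ * r ^ 2) by ring]
  linarith [one_sub_sq_div_two_le hquad (hcond r hr)]

/-- Theorem 1: the compactness bound for charged objects with positive
cosmological constant. -/
theorem compactness_bound_charged_cosmological
    (Λ R : ℝ) (hΛ : 0 ≤ Λ) (hR : 0 < R)
    (a a' a'' b b' b'' p p' ρ pT q q' : ℝ → ℝ)
    -- a and b are C² on (0, R]
    (ha : ∀ r ∈ Ioc 0 R, HasDerivAt a (a' r) r)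
    (ha' : ∀ r ∈ Ioc 0 R, HasDerivAt a' (a'' r) r)
    (ha'' : ContinuousOn a'' (Ioc 0 R))
    (hb : ∀ r ∈ Ioc 0 R, HasDerivAt b (b' r) r)
    (hb' : ∀ r ∈ Ioc 0 R, HasDerivAt b' (b'' r) r)
    (hb'' : ContinuousOn b'' (Ioc 0 R))
    -- p is C¹, ρ and p⊥ are continuous, q is C¹ on (0, R]
    (hp : ∀ r ∈ Ioc 0 R, HasDerivAt p (p' r) r)
    (hp' : ContinuousOn p' (Ioc 0 R))
    (hρc : ContinuousOn ρ (Ioc 0 R))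
    (hpTc : ContinuousOn pT (Ioc 0 R))
    (hq : ∀ r ∈ Ioc 0 R, HasDerivAt q (q' r) r)
    (hq' : ContinuousOn q' (Ioc 0 R))
    -- integrability defining m and f
    (hmInt : IntegrableOn (fun η => 4 * π * ρ η * η ^ 2) (Ioc 0 R))
    (hfInt : IntegrableOn (fun η => q η ^ 2 / η ^ 2) (Ioc 0 R))
    -- the Einstein–Maxwell equations (ee1)–(ee3) on (0, R]
    (ee1 : ∀ r ∈ Ioc 0 R, 8 * π * ρ r + q r ^ 2 / r ^ 4 =
      (1 / r ^ 2) * (1 - Real.exp (-(b r)) + r * b' r * Real.exp (-(b r))) - Λ)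
    (ee2 : ∀ r ∈ Ioc 0 R, 8 * π * p r - q r ^ 2 / r ^ 4 =
      Real.exp (-(b r)) / r ^ 2 + a' r * Real.exp (-(b r)) / r - 1 / r ^ 2 + Λ)
    (ee3 : ∀ r ∈ Ioc 0 R, 8 * π * pT r - q r ^ 2 / r ^ 4 =
      (Real.exp (-(b r)) / 2) *
        (a'' r + (a' r / 2 + 1 / r) * (a' r - b' r)) + Λ)
    -- sign and energy conditions
    (hρ : ∀ r ∈ Ioc 0 R, 0 ≤ ρ r)
    (hppos : ∀ r ∈ Ioc 0 R, 0 ≤ p r)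
    (hdom : ∀ r ∈ Ioc 0 R, p r + 2 * pT r ≤ ρ r)
    -- regular-centre conditions
    (hmatch : ∀ r ∈ Ioc 0 R,
      Real.exp (-(b r)) = 1 - 2 * mFun ρ r / r - fFun q r / r - Λ * r ^ 2 / 3)
    (hq0 : Filter.Tendsto (fun r => q r ^ 2 / r ^ 2)
      (nhdsWithin 0 (Ioi 0)) (nhds 0))
    (hp0 : Filter.Tendsto (fun r => r ^ 2 * p r)
      (nhdsWithin 0 (Ioi 0)) (nhds 0))
    (hm0 : Filter.Tendsto (fun r => mFun ρ r / r)
      (nhdsWithin 0 (Ioi 0)) (nhds 0))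
    -- main condition
    (hcond : ∀ r ∈ Ioc 0 R, q r ^ 2 / r ^ 2 + Λ * r ^ 2 ≤ 1) :
    ∀ r ∈ Ioc 0 R,
      mg ρ q r / r ≤ 2 / 9 + q r ^ 2 / (3 * r ^ 2) - Λ * r ^ 2 / 3
        + (2 / 9) * Real.sqrt (1 + 3 * q r ^ 2 / r ^ 2 + 3 * Λ * r ^ 2) :=
  compactness_bound_charged_cosmological_general Λ R hΛ hR a a' a'' b b' p ρ pT q ha ha' hb ee1 ee2
    ee3 hρ hppos hdom hmatch hq0 hp0 hm0 hcond
end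
end

section
/- If (x, y, z₁, z₂) ∈ U and (4 - 3x + y - z₁ - z₂)² ≤ 16(1 - x), then x ≤ (4 - 3z₁ - 3z₂)/9 + (4/9)·√(1 + 3z₁ + 3z₂). -/
noncomputable section

/-- Completing the square: `(2ax + b)² = discrim a b c + 4a(ax² + bx + c)`. -/
theorem two_mul_mul_add_le_sqrt_discrim {a b c x : ℝ} (ha : 0 ≤ a)
    (h : a * (x * x) + b * x + c ≤ 0) : 2 * a * x + b ≤ √(discrim a b c) := by
  have hsq : (2 * a * x + b) ^ 2 ≤ discrim a b c := by
    rw [discrim]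
    nlinarith [mul_nonpos_of_nonneg_of_nonpos ha h]
  exact (le_abs_self _).trans (Real.abs_le_sqrt hsq)

theorem x_bound_of_w_le_sixteen_general (x y z₁ z₂ : ℝ)
    (hx1 : x < 1) (hy : 0 ≤ y)
    (hz : z₁ + z₂ ≤ 1)
    (hw : (4 - 3 * x + y - z₁ - z₂) ^ 2 ≤ 16 * (1 - x)) :
    x ≤ (4 - 3 * z₁ - 3 * z₂) / 9 + (4 / 9) * Real.sqrt (1 + 3 * z₁ + 3 * z₂) := by
  set s := z₁ + z₂
  have hbase : 0 ≤ 4 - 3 * x - s := by linarith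
  have hdrop_y : (4 - 3 * x - s) ^ 2 ≤ 16 * (1 - x) :=
    calc (4 - 3 * x - s) ^ 2 ≤ (4 - 3 * x - s + y) ^ 2 :=
          pow_le_pow_left₀ hbase (by linarith) 2
      _ = (4 - 3 * x + y - z₁ - z₂) ^ 2 := by ring
      _ ≤ 16 * (1 - x) := hw
  -- `hdrop_y` says `9x² + (6s - 8)x + s² - 8s ≤ 0`, whose discriminant is `64(1 + 3s)`.
  have hroot := two_mul_mul_add_le_sqrt_discrim (a := 9) (b := 6 * s - 8) (c := s ^ 2 - 8 * s)
    (x := x) (by norm_num) (by linarith)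
  have hdiscrim : discrim 9 (6 * s - 8) (s ^ 2 - 8 * s) = 8 ^ 2 * (1 + 3 * z₁ + 3 * z₂) := by
    rw [discrim]; ring
  rw [hdiscrim, Real.sqrt_mul (by norm_num), Real.sqrt_sq (by norm_num)] at hroot
  linarith

theorem x_bound_of_w_le_sixteen (x y z₁ z₂ : ℝ)
    (hx0 : 0 ≤ x) (hx1 : x < 1) (hy : 0 ≤ y) (hz₁ : 0 ≤ z₁) (hz₂ : 0 ≤ z₂)
    (hz : z₁ + z₂ ≤ 1)
    (hw : (4 - 3 * x + y - z₁ - z₂) ^ 2 ≤ 16 * (1 - x)) :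
    x ≤ (4 - 3 * z₁ - 3 * z₂) / 9 + (4 / 9) * Real.sqrt (1 + 3 * z₁ + 3 * z₂) :=
  x_bound_of_w_le_sixteen_general x y z₁ z₂ hx1 hy hz hw
end
end

section
/- Let Λ ∈ ℝ and R > 0. Suppose b : (0,R] → ℝ is C¹, ρ and q are continuous on (0,R] with ρη² and q(η)²/η² integrable near 0, equation (ee1) holds on (0,R], and lim_{r→0⁺} r·(1 - e^{-b(r)}) = 0. Then for all r ∈ (0,R]: e^{-b(r)} = 1 - 2m(r)/r - f(r)/r - Λr²/3, where m(r) = ∫₀ʳ 4πρ(η)η² dη and f(r) = ∫₀ʳ q(η)²/η² dη. -/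
/-!
Multiplied by `r²`, equation (ee1) says that `g(r) = r (1 - e^{-b(r)})` has derivative
`8πρr² + q²/r² + Λr²`. The boundary condition says `g(0⁺) = 0`, so the fundamental theorem of
calculus on `(0, r]`, in its form with a one-sided limit at the endpoint, gives `g(r)` as the
integral of that derivative, which is `2m(r) + f(r) + Λr³/3`.
-/

open Real Set MeasureTheory

theorem hasDerivAt_mul_one_sub_exp_neg {b : ℝ → ℝ} {b' r : ℝ} (hb : HasDerivAt b b' r) :
    HasDerivAt (fun x => x * (1 - exp (-b x))) (1 - exp (-b r) + r * b' * exp (-b r)) r := by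
  have hexp : HasDerivAt (fun x => 1 - exp (-b x)) (b' * exp (-b r)) r := by
    simpa [mul_comm] using (hb.neg.exp).const_sub 1
  exact ((hasDerivAt_id' r).mul hexp).congr_deriv (by ring)

theorem hasDerivAt_mul_one_sub_exp_neg_of_ee1 {Λ ρr qr b' r : ℝ} {b : ℝ → ℝ} (hr : r ≠ 0)
    (hb : HasDerivAt b b' r)
    (ee1 : 8 * π * ρr + qr ^ 2 / r ^ 4 =
      (1 / r ^ 2) * (1 - exp (-(b r)) + r * b' * exp (-(b r))) - Λ) :
    HasDerivAt (fun x => x * (1 - exp (-b x)))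
      (2 * (4 * π * ρr * r ^ 2) + qr ^ 2 / r ^ 2 + Λ * r ^ 2) r := by
  convert hasDerivAt_mul_one_sub_exp_neg hb using 1
  field_simp at ee1 ⊢
  linear_combination ee1

theorem setIntegral_Ioc_zero_const_mul_sq (Λ : ℝ) {r : ℝ} (hr : 0 ≤ r) :
    ∫ η in Ioc 0 r, Λ * η ^ 2 = Λ * r ^ 3 / 3 := by
  rw [integral_const_mul, ← intervalIntegral.integral_of_le hr, integral_pow]
  ring

theorem setIntegral_Ioc_eq_sub_of_hasDerivAt_of_tendsto {f f' : ℝ → ℝ} {a b L : ℝ} (hab : a < b)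
    (hderiv : ∀ x ∈ Ioc a b, HasDerivAt f (f' x) x) (hint : IntegrableOn f' (Ioc a b))
    (hlim : Filter.Tendsto f (nhdsWithin a (Ioi a)) (nhds L)) :
    ∫ x in Ioc a b, f' x = f b - L := by
  rw [← intervalIntegral.integral_of_le hab.le]
  exact intervalIntegral.integral_eq_sub_of_hasDerivAt_of_tendsto hab
    (fun x hx => hderiv x (Ioo_subset_Ioc_self hx))
    ((intervalIntegrable_iff_integrableOn_Ioc_of_le hab.le).2 hint) hlim
    ((hderiv b ⟨hab, le_rfl⟩).continuousAt.tendsto.mono_left nhdsWithin_le_nhds)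

theorem solve_ee1_general
    (Λ R : ℝ)
    (b b' ρ q : ℝ → ℝ)
    -- b is C¹ on (0, R]
    (hb : ∀ r ∈ Ioc 0 R, HasDerivAt b (b' r) r)
    -- ρη² and q(η)²/η² are integrable near 0
    (hmInt : IntegrableOn (fun η => ρ η * η ^ 2) (Ioc 0 R))
    (hfInt : IntegrableOn (fun η => q η ^ 2 / η ^ 2) (Ioc 0 R))
    -- equation (ee1) on (0, R]
    (ee1 : ∀ r ∈ Ioc 0 R, 8 * π * ρ r + q r ^ 2 / r ^ 4 =
      (1 / r ^ 2) * (1 - Real.exp (-(b r)) + r * b' r * Real.exp (-(b r))) - Λ)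
    -- boundary condition at the centre
    (hcentre : Filter.Tendsto (fun r => r * (1 - Real.exp (-(b r))))
      (nhdsWithin 0 (Ioi 0)) (nhds 0)) :
    ∀ r ∈ Ioc 0 R,
      Real.exp (-(b r)) = 1 - 2 * (∫ η in Ioc (0 : ℝ) r, 4 * π * ρ η * η ^ 2) / r
        - (∫ η in Ioc (0 : ℝ) r, q η ^ 2 / η ^ 2) / r - Λ * r ^ 2 / 3 := by
  intro r ⟨hr, hrR⟩
  have hsub : Ioc 0 r ⊆ Ioc 0 R := Ioc_subset_Ioc_right hrR
  have hmass : IntegrableOn (fun η => 4 * π * ρ η * η ^ 2) (Ioc 0 r) :=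
    IntegrableOn.congr_fun ((hmInt.mono_set hsub).const_mul (4 * π)) (fun η _ => by ring)
      measurableSet_Ioc
  have hcharge : IntegrableOn (fun η => q η ^ 2 / η ^ 2) (Ioc 0 r) := hfInt.mono_set hsub
  have hΛ : IntegrableOn (fun η : ℝ => Λ * η ^ 2) (Ioc 0 r) :=
    (continuous_const.mul (continuous_pow 2)).integrableOn_Ioc
  have hmass_two : IntegrableOn (fun η => 2 * (4 * π * ρ η * η ^ 2)) (Ioc 0 r) := hmass.const_mul 2
  have hmatter : IntegrableOn (fun η => 2 * (4 * π * ρ η * η ^ 2) + q η ^ 2 / η ^ 2) (Ioc 0 r) :=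
    hmass_two.add hcharge
  have hFTC := setIntegral_Ioc_eq_sub_of_hasDerivAt_of_tendsto hr
    (fun x hx => hasDerivAt_mul_one_sub_exp_neg_of_ee1 hx.1.ne' (hb x (hsub hx)) (ee1 x (hsub hx)))
    (hmatter.add hΛ) hcentre
  rw [integral_add hmatter hΛ, integral_add hmass_two hcharge, integral_const_mul,
    setIntegral_Ioc_zero_const_mul_sq Λ hr.le] at hFTC
  field_simp
  linarith

/-- Solving equation (ee1): the metric coefficient `e^{-b}` is determined by the
mass `m(r) = ∫₀ʳ 4πρη² dη` and `f(r) = ∫₀ʳ q(η)²/η² dη`. -/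
theorem solve_ee1
    (Λ R : ℝ) (hR : 0 < R)
    (b b' ρ q : ℝ → ℝ)
    -- b is C¹ on (0, R]
    (hb : ∀ r ∈ Ioc 0 R, HasDerivAt b (b' r) r)
    (hb' : ContinuousOn b' (Ioc 0 R))
    -- ρ and q are continuous on (0, R]
    (hρc : ContinuousOn ρ (Ioc 0 R))
    (hqc : ContinuousOn q (Ioc 0 R))
    -- ρη² and q(η)²/η² are integrable near 0
    (hmInt : IntegrableOn (fun η => ρ η * η ^ 2) (Ioc 0 R))
    (hfInt : IntegrableOn (fun η => q η ^ 2 / η ^ 2) (Ioc 0 R))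
    -- equation (ee1) on (0, R]
    (ee1 : ∀ r ∈ Ioc 0 R, 8 * π * ρ r + q r ^ 2 / r ^ 4 =
      (1 / r ^ 2) * (1 - Real.exp (-(b r)) + r * b' r * Real.exp (-(b r))) - Λ)
    -- boundary condition at the centre
    (hcentre : Filter.Tendsto (fun r => r * (1 - Real.exp (-(b r))))
      (nhdsWithin 0 (Ioi 0)) (nhds 0)) :
    ∀ r ∈ Ioc 0 R,
      Real.exp (-(b r)) = 1 - 2 * (∫ η in Ioc (0 : ℝ) r, 4 * π * ρ η * η ^ 2) / r
        - (∫ η in Ioc (0 : ℝ) r, q η ^ 2 / η ^ 2) / r - Λ * r ^ 2 / 3 :=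
  solve_ee1_general Λ R b b' ρ q hb hmInt hfInt ee1 hcentre
end

section
/- Let M, Q, R, Λ be real numbers with R > 0, Λ ≥ 0, Q²/R² + ΛR² ≤ 1. If 1 - 2M/R + Q²/R² - ΛR²/3 = 0 and M/R ≤ 2/9 + Q²/(3R²) - ΛR²/3 + (2/9)·√(1 + 3Q²/R² + 3ΛR²), then Q²/R² + ΛR² = 1. -/
/-! With `x = Q²/R²`, `y = ΛR²` and `u = 1 + 3(x + y)`, eliminating `M/R` between the horizon
equation and the compactness bound leaves `u + 4 ≤ 4√u`, i.e. `(√u - 2)² ≤ 0`. Hence `u = 4`,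
which is `x + y = 1`. -/

theorem eq_sq_of_add_sq_le_two_mul_sqrt {u a : ℝ} (hu : 0 ≤ u)
    (h : u + a ^ 2 ≤ 2 * a * Real.sqrt u) : u = a ^ 2 := by
  have hsq : Real.sqrt u ^ 2 = u := Real.sq_sqrt hu
  have hsqrt : Real.sqrt u = a := by nlinarith [sq_nonneg (Real.sqrt u - a)]
  rw [← hsq, hsqrt]

theorem add_eq_one_of_horizon_of_compactness_bound {m x y : ℝ} (hxy : 0 ≤ 1 + 3 * x + 3 * y)
    (hΩ : 1 - 2 * m + x - y / 3 = 0)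
    (hbound : m ≤ 2 / 9 + x / 3 - y / 3 + 2 / 9 * Real.sqrt (1 + 3 * x + 3 * y)) :
    x + y = 1 := by
  have hu := eq_sq_of_add_sq_le_two_mul_sqrt (a := 2) hxy (by linarith)
  linarith

theorem extreme_horizon_case_general (M Q R Λ : ℝ)
    (hΛ : 0 ≤ Λ)
    (hΩ : 1 - 2 * M / R + Q ^ 2 / R ^ 2 - Λ * R ^ 2 / 3 = 0)
    (hbound : M / R ≤ 2 / 9 + Q ^ 2 / (3 * R ^ 2) - Λ * R ^ 2 / 3
      + (2 / 9) * Real.sqrt (1 + 3 * Q ^ 2 / R ^ 2 + 3 * Λ * R ^ 2)) :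
    Q ^ 2 / R ^ 2 + Λ * R ^ 2 = 1 := by
  have hx : 0 ≤ Q ^ 2 / R ^ 2 := by positivity
  have hy : 0 ≤ Λ * R ^ 2 := by positivity
  refine add_eq_one_of_horizon_of_compactness_bound (m := M / R) (by linarith) ?_ ?_
  · rw [← hΩ]; ring
  · convert hbound using 3
    · ring
    · congr 1; ring

theorem extreme_horizon_case (M Q R Λ : ℝ)
    (hR : 0 < R) (hΛ : 0 ≤ Λ)
    (hcond : Q ^ 2 / R ^ 2 + Λ * R ^ 2 ≤ 1)
    (hΩ : 1 - 2 * M / R + Q ^ 2 / R ^ 2 - Λ * R ^ 2 / 3 = 0)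
    (hbound : M / R ≤ 2 / 9 + Q ^ 2 / (3 * R ^ 2) - Λ * R ^ 2 / 3
      + (2 / 9) * Real.sqrt (1 + 3 * Q ^ 2 / R ^ 2 + 3 * Λ * R ^ 2)) :
    Q ^ 2 / R ^ 2 + Λ * R ^ 2 = 1 :=
  extreme_horizon_case_general M Q R Λ hΛ hΩ hbound
end
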